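/- Let O be a complete discrete valuation ring with fraction field K and residue field k, let 𝒳 → Spec O be a proper scheme, and let Σ be an automorphism of 𝒳 over O. If Σ fixes a geometric point of the generic fiber 𝒳_K (i.e. there exist an algebraically closed field Ω and a point s : Spec Ω → 𝒳 factoring through 𝒳_K with Σ ∘ s = s), then Σ also fixes a geometric point of the special fiber 𝒳_k. -/

import Mathlib

/-!
STATEMENT 2. Let `O` be a complete discrete valuation ring with fraction field
`K` and residue field `k`, let `𝒳 → Spec O` be a proper scheme, and let `Σ` be
an automorphism of `𝒳` over `O`.  If `Σ` fixes a geometric point of the generic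
fiber `𝒳_K` (i.e. there exist an algebraically closed field `Ω` and a point
`s : Spec Ω → 𝒳` factoring through `𝒳_K` with `Σ ∘ s = s`), then `Σ` also fixes
a geometric point of the special fiber `𝒳_k`.

A geometric point of `𝒳` lies on the generic (resp. special) fiber precisely
when the composite `Spec Ω ⟶ Spec O` factors through `Spec K ⟶ Spec O`
(resp. through `Spec k ⟶ Spec O`); this is how "factoring through the fiber"
is expressed below.
-/

open AlgebraicGeometry CategoryTheory Limits

/-- A geometric point of a scheme `X`: a morphism from the spectrum of an
algebraically closed field. -/
structure GeometricPoint (X : Scheme) where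
  Ω : Type
  [fieldΩ : Field Ω]
  [algClosedΩ : IsAlgClosed Ω]
  pt : Spec (CommRingCat.of Ω) ⟶ X

attribute [instance] GeometricPoint.fieldΩ GeometricPoint.algClosedΩ

theorem fixed_geometric_point_specializes
    (O : Type) [CommRing O] [IsDomain O] [IsDiscreteValuationRing O]
    -- `O` is complete (with respect to its maximal-ideal-adic topology)
    [IsAdicComplete (IsLocalRing.maximalIdeal O) O]
    -- a proper scheme `𝒳 → Spec O`
    (𝒳 : Over (Spec (CommRingCat.of O))) (h𝒳 : IsProper 𝒳.hom)
    -- an automorphism `Σ` of `𝒳` over `O`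
    (Sig : 𝒳 ≅ 𝒳)
    -- a geometric point `s` of `𝒳` ...
    (s : GeometricPoint 𝒳.left)
    -- ... lying on the generic fiber `𝒳_K`, where `K = Frac O` ...
    (hgen : ∃ g : FractionRing O →+* s.Ω,
      s.pt ≫ 𝒳.hom = Spec.map (CommRingCat.ofHom (g.comp (algebraMap O (FractionRing O)))))
    -- ... which is fixed by `Σ`
    (hfix : s.pt ≫ Sig.hom.left = s.pt) :
    -- then `Σ` fixes a geometric point of the special fiber `𝒳_k`, `k` the residue field
    ∃ s' : GeometricPoint 𝒳.left,
      (∃ g : IsLocalRing.ResidueField O →+* s'.Ω,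
        s'.pt ≫ 𝒳.hom = Spec.map (CommRingCat.ofHom (g.comp (IsLocalRing.residue O)))) ∧
      s'.pt ≫ Sig.hom.left = s'.pt := by
  classical
  obtain ⟨g, hs⟩ := hgen
  -- choose a valuation subring `A` of `Ω` dominating (the image of) `O`
  obtain ⟨A, hA, hloc⟩ := IsLocalRing.exists_factor_valuationRing
    (g.comp (algebraMap O (FractionRing O)))
  set φ : O →+* A := (g.comp (algebraMap O (FractionRing O))).codRestrict A.toSubring hA with hφ
  -- the valuative commutative square
  have hcomm : CommSq s.pt (Spec.map (CommRingCat.ofHom (algebraMap A s.Ω))) 𝒳.hom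
      (Spec.map (CommRingCat.ofHom φ)) := by
    constructor
    rw [hs, ← Spec.map_comp]
    rfl
  let S : ValuativeCommSq 𝒳.hom :=
    { R := A, K := s.Ω, i₁ := s.pt, i₂ := Spec.map (CommRingCat.ofHom φ), commSq := hcomm }
  rw [IsProper.eq_valuativeCriterion] at h𝒳
  obtain ⟨⟨⟨hvc, _⟩, _⟩, _⟩ := h𝒳
  obtain ⟨hu⟩ := hvc S
  set l : Spec (CommRingCat.of A) ⟶ 𝒳.left := hu.default.l with hl
  have fac_left : Spec.map (CommRingCat.ofHom (algebraMap A s.Ω)) ≫ l = s.pt :=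
    hu.default.fac_left
  have fac_right : l ≫ 𝒳.hom = Spec.map (CommRingCat.ofHom φ) := hu.default.fac_right
  -- the lift is fixed by Σ, by uniqueness
  have hfixl : l ≫ Sig.hom.left = l := by
    have h2 : (⟨l ≫ Sig.hom.left, by
        rw [← Category.assoc, fac_left, hfix], by
        rw [Category.assoc, Over.w Sig.hom, fac_right]⟩ : S.commSq.LiftStruct)
        = hu.default := hu.uniq _
    exact congrArg CommSq.LiftStruct.l h2
  -- specialize to the closed point of `Spec A`
  let ψ : A →+* AlgebraicClosure (IsLocalRing.ResidueField A) :=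
    (algebraMap (IsLocalRing.ResidueField A)
      (AlgebraicClosure (IsLocalRing.ResidueField A))).comp (IsLocalRing.residue A)
  have h0 : ∀ a ∈ IsLocalRing.maximalIdeal O, ψ (φ a) = 0 := by
    intro a ha
    have hφa : φ a ∈ IsLocalRing.maximalIdeal A := by
      intro hunit
      exact ha (hloc.1 _ hunit)
    have h1 : IsLocalRing.residue A (φ a) = 0 := Ideal.Quotient.eq_zero_iff_mem.mpr hφa
    show (algebraMap _ _) (IsLocalRing.residue A (φ a)) = 0
    rw [h1, map_zero]
  refine ⟨{ Ω := AlgebraicClosure (IsLocalRing.ResidueField A),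
            pt := Spec.map (CommRingCat.ofHom ψ) ≫ l },
    ⟨⟨Ideal.Quotient.lift (IsLocalRing.maximalIdeal O) (ψ.comp φ) h0, ?_⟩, ?_⟩⟩
  · show (Spec.map (CommRingCat.ofHom ψ) ≫ l) ≫ 𝒳.hom = _
    rw [Category.assoc, fac_right, ← Spec.map_comp]
    rfl
  · show (Spec.map (CommRingCat.ofHom ψ) ≫ l) ≫ Sig.hom.left = _
    rw [Category.assoc, hfixl]
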